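/- (Core estimate of Theorem 1.) Let x : ℝ → ℝ^N be a differentiable curve and e : ℝ → ℝ^m a continuous curve satisfying x'(t) = A x(t) + B e(t) for all t, where A is an N×N real matrix and B a nonzero N×m real matrix. Suppose P and Q are symmetric positive definite N×N real matrices satisfying Aᵀ P + P A = −Q, and let λ_min(Q) > 0 be the smallest eigenvalue of Q. Fix σ ∈ (0,1) and suppose the measurement error satisfies, at a time t, the event-triggering bound ‖e(t)‖² ≤ σ · (λ_min(Q)² / (4 ‖Bᵀ Pᵀ P B‖)) · ‖x(t)‖². Then d/dt ( x(t)ᵀ P x(t) ) ≤ −(1 − σ) (λ_min(Q)/2) ‖x(t)‖² ≤ 0 at that time t. -/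

import Mathlib

/-!
Along `x' = A x + B e` the derivative of `V = ⟪x, P x⟫` is `-⟪x, Q x⟫ + 2 ⟪x, P B e⟫`, by the
Lyapunov equation and the symmetry of `P`. The first term is at most `-λ ‖x‖²` (Rayleigh bound,
`λ = λ_min(Q)`). Young's inequality bounds the second by `(λ/2) ‖x‖² + (2/λ) ‖P B e‖²`, and
`‖P B e‖² ≤ ‖Bᵀ Pᵀ P B‖ ‖e‖² ≤ σ (λ/2)² ‖x‖²` by the triggering rule, so
`V' ≤ -λ ‖x‖² + (1 + σ) (λ/2) ‖x‖² = -(1 - σ) (λ/2) ‖x‖²`.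
-/

open Matrix
open scoped RealInnerProductSpace

/-- Multiplication of a vector in Euclidean space by a real matrix. -/
noncomputable def matVec {a b : ℕ} (M : Matrix (Fin a) (Fin b) ℝ)
    (v : EuclideanSpace ℝ (Fin b)) : EuclideanSpace ℝ (Fin a) :=
  Matrix.toEuclideanLin M v

/-- The operator norm of a real matrix, induced by the Euclidean norms. -/
noncomputable def opNorm {a b : ℕ} (M : Matrix (Fin a) (Fin b) ℝ) : ℝ :=
  ‖LinearMap.toContinuousLinearMap (Matrix.toEuclideanLin M)‖

section matVec

variable {a b c : ℕ}

lemma matVec_mul (M : Matrix (Fin a) (Fin b) ℝ) (M' : Matrix (Fin b) (Fin c) ℝ)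
    (v : EuclideanSpace ℝ (Fin c)) : matVec (M * M') v = matVec M (matVec M' v) := by
  simp [matVec, Matrix.toLpLin_apply, Matrix.mulVec_mulVec]

lemma matVec_add (M : Matrix (Fin a) (Fin b) ℝ) (v w : EuclideanSpace ℝ (Fin b)) :
    matVec M (v + w) = matVec M v + matVec M w :=
  map_add _ v w

lemma add_matVec (M M' : Matrix (Fin a) (Fin b) ℝ) (v : EuclideanSpace ℝ (Fin b)) :
    matVec (M + M') v = matVec M v + matVec M' v := by
  simp [matVec]

lemma neg_matVec (M : Matrix (Fin a) (Fin b) ℝ) (v : EuclideanSpace ℝ (Fin b)) :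
    matVec (-M) v = -matVec M v := by
  simp [matVec]

lemma inner_matVec_transpose (M : Matrix (Fin a) (Fin b) ℝ) (v : EuclideanSpace ℝ (Fin a))
    (w : EuclideanSpace ℝ (Fin b)) : ⟪matVec Mᵀ v, w⟫ = ⟪v, matVec M w⟫ := by
  rw [matVec, matVec, ← conjTranspose_eq_transpose_of_trivial,
    Matrix.toEuclideanLin_conjTranspose_eq_adjoint]
  exact LinearMap.adjoint_inner_left _ _ _

lemma inner_matVec_comm {P : Matrix (Fin a) (Fin a) ℝ} (hP : P.IsHermitian)
    (v w : EuclideanSpace ℝ (Fin a)) : ⟪matVec P v, w⟫ = ⟪v, matVec P w⟫ :=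
  isSymmetric_toEuclideanLin_iff.mpr hP v w

lemma norm_matVec_le (M : Matrix (Fin a) (Fin b) ℝ) (v : EuclideanSpace ℝ (Fin b)) :
    ‖matVec M v‖ ≤ opNorm M * ‖v‖ :=
  (LinearMap.toContinuousLinearMap (Matrix.toEuclideanLin M)).le_opNorm v

lemma sq_norm_matVec_le (M : Matrix (Fin a) (Fin b) ℝ) (v : EuclideanSpace ℝ (Fin b)) :
    ‖matVec M v‖ ^ 2 ≤ opNorm (Mᵀ * M) * ‖v‖ ^ 2 :=
  calc ‖matVec M v‖ ^ 2 = ⟪matVec (Mᵀ * M) v, v⟫ := by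
        rw [matVec_mul, inner_matVec_transpose, real_inner_self_eq_norm_sq]
    _ ≤ ‖matVec (Mᵀ * M) v‖ * ‖v‖ := real_inner_le_norm _ _
    _ ≤ opNorm (Mᵀ * M) * ‖v‖ * ‖v‖ := by gcongr; exact norm_matVec_le _ _
    _ = opNorm (Mᵀ * M) * ‖v‖ ^ 2 := by ring

lemma matVec_eigenvectorBasis {Q : Matrix (Fin a) (Fin a) ℝ} (hQ : Q.IsHermitian) (i : Fin a) :
    matVec Q (hQ.eigenvectorBasis i) = hQ.eigenvalues i • hQ.eigenvectorBasis i := by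
  rw [matVec, Matrix.toLpLin_apply, hQ.mulVec_eigenvectorBasis]
  rfl

lemma mul_sq_norm_le_inner_matVec {Q : Matrix (Fin a) (Fin a) ℝ} (hQ : Q.IsHermitian) {c : ℝ}
    (hc : ∀ i, c ≤ hQ.eigenvalues i) (v : EuclideanSpace ℝ (Fin a)) :
    c * ‖v‖ ^ 2 ≤ ⟪v, matVec Q v⟫ := by
  set β := hQ.eigenvectorBasis
  calc c * ‖v‖ ^ 2 = ∑ i, c * ⟪β i, v⟫ ^ 2 := by rw [← β.sum_sq_inner_right, Finset.mul_sum]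
    _ ≤ ∑ i, hQ.eigenvalues i * ⟪β i, v⟫ ^ 2 := by gcongr with i; exact hc i
    _ = ∑ i, ⟪v, β i⟫ * ⟪β i, matVec Q v⟫ := by
        refine Finset.sum_congr rfl fun i _ => ?_
        rw [← inner_matVec_comm hQ, matVec_eigenvectorBasis, real_inner_smul_left,
          real_inner_comm v]
        ring
    _ = ⟪v, matVec Q v⟫ := β.sum_inner_mul_inner v _

end matVec

lemma two_mul_inner_le {E : Type*} [NormedAddCommGroup E] [InnerProductSpace ℝ E] {c : ℝ}
    (hc : 0 < c) (x y : E) : 2 * ⟪x, y⟫ ≤ c * ‖x‖ ^ 2 + ‖y‖ ^ 2 / c := by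
  have hyoung : 2 * (‖x‖ * ‖y‖) ≤ c * ‖x‖ ^ 2 + ‖y‖ ^ 2 / c := by
    rw [← sub_nonneg]
    have : c * ‖x‖ ^ 2 + ‖y‖ ^ 2 / c - 2 * (‖x‖ * ‖y‖) = (c * ‖x‖ - ‖y‖) ^ 2 / c := by
      field_simp; ring
    rw [this]; positivity
  linarith [real_inner_le_norm x y]

section Lyapunov

variable {N : ℕ} {A P Q : Matrix (Fin N) (Fin N) ℝ}

lemma two_mul_inner_matVec_of_lyapunov (hP : P.IsHermitian) (hLyap : Aᵀ * P + P * A = -Q)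
    (v : EuclideanSpace ℝ (Fin N)) : 2 * ⟪v, matVec P (matVec A v)⟫ = -⟪v, matVec Q v⟫ :=
  calc 2 * ⟪v, matVec P (matVec A v)⟫ = ⟪v, matVec (Aᵀ * P + P * A) v⟫ := by
        rw [add_matVec, inner_add_right, matVec_mul, matVec_mul,
          real_inner_comm (matVec Aᵀ (matVec P v)), inner_matVec_transpose, inner_matVec_comm hP]
        ring
    _ = -⟪v, matVec Q v⟫ := by rw [hLyap, neg_matVec, inner_neg_right]

lemma hasDerivAt_inner_matVec_of_lyapunov (hP : P.IsHermitian) (hLyap : Aᵀ * P + P * A = -Q)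
    {x : ℝ → EuclideanSpace ℝ (Fin N)} {u : EuclideanSpace ℝ (Fin N)} {t : ℝ}
    (hx : HasDerivAt x (matVec A (x t) + u) t) :
    HasDerivAt (fun s => ⟪x s, matVec P (x s)⟫)
      (-⟪x t, matVec Q (x t)⟫ + 2 * ⟪x t, matVec P u⟫) t := by
  have hPx : HasDerivAt (fun s => matVec P (x s)) (matVec P (matVec A (x t) + u)) t :=
    (LinearMap.toContinuousLinearMap (Matrix.toEuclideanLin P)).hasFDerivAt.comp_hasDerivAt t hx
  refine (hx.inner ℝ hPx).congr_deriv ?_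
  rw [← inner_matVec_comm hP (matVec A (x t) + u), real_inner_comm (x t), matVec_add,
    inner_add_right, ← two_mul_inner_matVec_of_lyapunov hP hLyap]
  ring

end Lyapunov

lemma sq_norm_matVec_le_of_le_div {a b : ℕ} (M : Matrix (Fin a) (Fin b) ℝ)
    {v : EuclideanSpace ℝ (Fin b)} {c r : ℝ} (hc : 0 ≤ c) (hr : 0 ≤ r)
    (hv : ‖v‖ ^ 2 ≤ c / opNorm (Mᵀ * M) * r) : ‖matVec M v‖ ^ 2 ≤ c * r := by
  have hK : 0 ≤ opNorm (Mᵀ * M) := norm_nonneg _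
  calc ‖matVec M v‖ ^ 2 ≤ opNorm (Mᵀ * M) * ‖v‖ ^ 2 := sq_norm_matVec_le M v
    _ ≤ opNorm (Mᵀ * M) * (c / opNorm (Mᵀ * M) * r) := by gcongr
    _ ≤ c * r := by
        rcases hK.eq_or_lt with hK0 | hKpos
        · rw [← hK0]; simp only [zero_mul]; positivity
        · rw [← mul_assoc, mul_div_cancel₀ _ hKpos.ne']

theorem event_triggered_lyapunov_decrease_general {N m : ℕ}
    (A P Q : Matrix (Fin N) (Fin N) ℝ) (B : Matrix (Fin N) (Fin m) ℝ)
    (hP : P.PosDef) (hQ : Q.PosDef)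
    (hLyap : Aᵀ * P + P * A = -Q)
    (lamQ : ℝ) (hlamQ : IsLeast (Set.range hQ.1.eigenvalues) lamQ) (hlamQpos : 0 < lamQ)
    (σ : ℝ) (hσ : σ ∈ Set.Ioo (0 : ℝ) 1)
    (x : ℝ → EuclideanSpace ℝ (Fin N)) (e : ℝ → EuclideanSpace ℝ (Fin m))
    (hx : ∀ s, HasDerivAt x (matVec A (x s) + matVec B (e s)) s)
    (t : ℝ)
    (htrig : ‖e t‖ ^ 2 ≤ σ * (lamQ ^ 2 / (4 * opNorm (Bᵀ * Pᵀ * P * B))) * ‖x t‖ ^ 2) :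
    deriv (fun s => ⟪x s, matVec P (x s)⟫) t ≤ -(1 - σ) * (lamQ / 2) * ‖x t‖ ^ 2 ∧
      -(1 - σ) * (lamQ / 2) * ‖x t‖ ^ 2 ≤ 0 := by
  obtain ⟨hσ0, hσ1⟩ := hσ
  have hhalf : 0 < lamQ / 2 := half_pos hlamQpos
  set w := matVec (P * B) (e t)
  have hderiv :
      deriv (fun s => ⟪x s, matVec P (x s)⟫) t = -⟪x t, matVec Q (x t)⟫ + 2 * ⟪x t, w⟫ := by
    rw [(hasDerivAt_inner_matVec_of_lyapunov hP.1 hLyap (hx t)).deriv, ← matVec_mul]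
  have hQx : lamQ * ‖x t‖ ^ 2 ≤ ⟪x t, matVec Q (x t)⟫ :=
    mul_sq_norm_le_inner_matVec hQ.1 (fun i => hlamQ.2 ⟨i, rfl⟩) (x t)
  have hw : ‖w‖ ^ 2 ≤ σ * (lamQ / 2) ^ 2 * ‖x t‖ ^ 2 := by
    refine sq_norm_matVec_le_of_le_div (P * B) (by positivity) (by positivity) ?_
    convert htrig using 2
    simp only [transpose_mul, Matrix.mul_assoc]
    ring
  have hwc : ‖w‖ ^ 2 / (lamQ / 2) ≤ σ * (lamQ / 2) * ‖x t‖ ^ 2 := by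
    rw [div_le_iff₀ hhalf]; linarith
  refine ⟨?_, ?_⟩
  · rw [hderiv]
    linarith [two_mul_inner_le hhalf (x t) w]
  · have h1σ : 0 < 1 - σ := sub_pos.mpr hσ1
    have : 0 ≤ (1 - σ) * (lamQ / 2) * ‖x t‖ ^ 2 := by positivity
    linarith

/-- Core estimate of Theorem 1: under the event-triggering bound
`‖e(t)‖² ≤ σ (λ_min(Q)²/(4‖BᵀPᵀPB‖)) ‖x(t)‖²` with `σ ∈ (0,1)`, the Lyapunov derivative
satisfies `d/dt (xᵀ P x) ≤ -(1-σ)(λ_min(Q)/2)‖x‖² ≤ 0`. -/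
theorem event_triggered_lyapunov_decrease {N m : ℕ}
    (A P Q : Matrix (Fin N) (Fin N) ℝ) (B : Matrix (Fin N) (Fin m) ℝ)
    (hB : B ≠ 0)
    (hP : P.PosDef) (hQ : Q.PosDef)
    (hLyap : Aᵀ * P + P * A = -Q)
    (lamQ : ℝ) (hlamQ : IsLeast (Set.range hQ.1.eigenvalues) lamQ) (hlamQpos : 0 < lamQ)
    (σ : ℝ) (hσ : σ ∈ Set.Ioo (0 : ℝ) 1)
    (x : ℝ → EuclideanSpace ℝ (Fin N)) (e : ℝ → EuclideanSpace ℝ (Fin m))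
    (he : Continuous e)
    (hx : ∀ s, HasDerivAt x (matVec A (x s) + matVec B (e s)) s)
    (t : ℝ)
    (htrig : ‖e t‖ ^ 2 ≤ σ * (lamQ ^ 2 / (4 * opNorm (Bᵀ * Pᵀ * P * B))) * ‖x t‖ ^ 2) :
    deriv (fun s => ⟪x s, matVec P (x s)⟫) t ≤ -(1 - σ) * (lamQ / 2) * ‖x t‖ ^ 2 ∧
      -(1 - σ) * (lamQ / 2) * ‖x t‖ ^ 2 ≤ 0 :=
  event_triggered_lyapunov_decrease_general A P Q B hP hQ hLyap lamQ hlamQ hlamQpos σ hσ x e hx t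
    htrig
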